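/- Assuming a conditional independence oracle and a distribution faithful to a Bayesian network, the Forward-Backward with Early Dropping algorithm run for two forward-backward Runs returns exactly the Markov blanket of the target T: after Run 1 all parents and children of T are selected (since none can be d-separated from T), after Run 2 all spouses of T are additionally selected (since conditioning on a common child d-connects them to T), and the backward phase removes exactly the selected variables outside the Markov blanket. -/

import Mathlib

open scoped Classical

/-- d-connection for a directed graph `E`: the vertex list `p` is a path from `x` to `y`
whose every collider is in `Z` or has a descendant in `Z`, and no non-collider is in `Z`. -/
def DConnecting {V : Type*} (E : V → V → Prop) (Z : Set V) (p : List V) (x y : V) : Prop :=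
  2 ≤ p.length ∧ p.head? = some x ∧ p.getLast? = some y ∧
  p.Chain' (fun a b => E a b ∨ E b a) ∧ p.Nodup ∧
  ∀ i (h : i + 2 < p.length),
    let a := p.get ⟨i, by omega⟩
    let b := p.get ⟨i + 1, by omega⟩
    let c := p.get ⟨i + 2, h⟩
    ((E a b ∧ E c b) → (b ∈ Z ∨ ∃ d ∈ Z, Relation.ReflTransGen E b d)) ∧
    (¬(E a b ∧ E c b) → b ∉ Z)

/-- `x` and `y` are d-separated given `Z` if no d-connecting path exists. -/
def DSeparated {V : Type*} (E : V → V → Prop) (Z : Set V) (x y : V) : Prop :=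
  ¬ ∃ p : List V, DConnecting E Z p x y

section Algorithm

variable {V : Type*} [Fintype V] [DecidableEq V] (E : V → V → Prop) (T : V)

/-- One step of the forward phase with Early Dropping, using the d-separation oracle
(faithfulness): some remaining variable that is conditionally dependent on `T` given the
current selection `S` is selected, and all remaining variables that are conditionally
independent of `T` given `S` are dropped from the remaining set. -/
noncomputable def FwdStep (p q : Finset V × Finset V) : Prop :=
  ∃ x ∈ p.2, ¬ DSeparated E ↑p.1 T x ∧
    q.1 = insert x p.1 ∧
    q.2 = (p.2.filter fun y => ¬ DSeparated E ↑p.1 T y).erase x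

/-- The forward phase is finished: every remaining variable is conditionally independent
of `T` given the selected set. -/
def FwdDone (p : Finset V × Finset V) : Prop :=
  ∀ y ∈ p.2, DSeparated E ↑p.1 T y

/-- A complete forward phase (one Run's forward loop) starting from selection `S₀` with all
non-selected variables (other than `T`) remaining, ending in a state where no remaining
variable can be selected. -/
def FwdPhase (S₀ S₁ : Finset V) : Prop :=
  ∃ R₁, Relation.ReflTransGen (FwdStep E T) (S₀, (Finset.univ.erase T) \ S₀) (S₁, R₁) ∧
    FwdDone E T (S₁, R₁)

/-- One backward-elimination step: remove a selected variable that is conditionally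
independent of `T` given the rest of the selection. -/
def BackStep (S S' : Finset V) : Prop :=
  ∃ x ∈ S, DSeparated E ↑(S.erase x) T x ∧ S' = S.erase x

/-- Backward elimination is finished: no selected variable can be removed. -/
def BackDone (S : Finset V) : Prop :=
  ∀ x ∈ S, ¬ DSeparated E ↑(S.erase x) T x

/-- A complete backward phase. -/
def BackPhase (S₀ S₁ : Finset V) : Prop :=
  Relation.ReflTransGen (BackStep E T) S₀ S₁ ∧ BackDone E T S₁

/-- One Run of the Forward-Backward with Early Dropping algorithm: a complete forward
phase followed by a complete backward phase. -/
def FBEDRun (S₀ S₁ : Finset V) : Prop :=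
  ∃ Sf, FwdPhase E T S₀ Sf ∧ BackPhase E T Sf S₁

/-- The (graphical) Markov blanket of `T` in a DAG: parents, children and spouses of `T`. -/
noncomputable def graphMB : Finset V :=
  Finset.univ.filter fun x => x ≠ T ∧ (E x T ∨ E T x ∨ ∃ c, E T c ∧ E x c)

end Algorithm

/-!
Parents and children of `T` are adjacent to it, so no selection d-separates them from `T`:
the forward phase of any Run selects them and no backward step removes them. Once the
children of `T` are selected, every spouse is d-connected to `T` through a common child, which
is a selected collider; hence the second Run selects and keeps the whole Markov blanket. It
removes everything else: given a superset of the Markov blanket, a d-connecting path from `T`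
would have to leave it through a selected non-collider.
-/

section DSeparation

variable {V : Type*} {E : V → V → Prop} {Z : Set V}

lemma ne_of_acyclic (hacyclic : ∀ v, ¬ Relation.TransGen E v v) {a b : V} (h : E a b) :
    a ≠ b := by
  rintro rfl
  exact hacyclic a (.single h)

lemma not_dSeparated_of_adj {x y : V} (hxy : x ≠ y) (h : E x y ∨ E y x) :
    ¬ DSeparated E Z x y :=
  not_not_intro ⟨[x, y], by simp, rfl, rfl, .cons_cons h (.singleton _), by simp [hxy],
    fun i hi => by simp at hi⟩

lemma not_dSeparated_of_collider {x y c : V} (hxy : x ≠ y) (hxc : x ≠ c) (hyc : y ≠ c)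
    (hx : E x c) (hy : E y c) (hc : c ∈ Z) : ¬ DSeparated E Z x y := by
  refine not_not_intro ⟨[x, c, y], by simp, rfl, rfl,
    .cons_cons (.inl hx) (.cons_cons (.inr hy) (.singleton _)), by simp [*, hyc.symm],
    fun i hi => ?_⟩
  obtain rfl : i = 0 := by simp at hi; omega
  exact ⟨fun _ => .inl hc, fun hn => absurd ⟨hx, hy⟩ hn⟩

variable [Fintype V] [DecidableEq V] {T x : V}

lemma mem_graphMB : x ∈ graphMB E T ↔ x ≠ T ∧ (E x T ∨ E T x ∨ ∃ c, E T c ∧ E x c) := by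
  simp [graphMB]

lemma not_dSeparated_of_mem_graphMB (hacyclic : ∀ v, ¬ Relation.TransGen E v v)
    (hx : x ∈ graphMB E T) (hZ : ∀ c, E T c → E x c → c ∈ Z) : ¬ DSeparated E Z T x := by
  obtain ⟨hxT, hadj | hadj | ⟨c, hTc, hxc⟩⟩ := mem_graphMB.mp hx
  · exact not_dSeparated_of_adj hxT.symm (.inr hadj)
  · exact not_dSeparated_of_adj hxT.symm (.inl hadj)
  · exact not_dSeparated_of_collider hxT.symm (ne_of_acyclic hacyclic hTc)
      (ne_of_acyclic hacyclic hxc) hTc hxc (hZ c hTc hxc)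

lemma dSeparated_of_graphMB_subset (hacyclic : ∀ v, ¬ Relation.TransGen E v v)
    (hx : x ∉ graphMB E T) (hZ : ↑(graphMB E T) ⊆ Z) : DSeparated E Z T x := by
  rintro ⟨_ | ⟨a, _ | ⟨v, p⟩⟩, hlen, hhead, hlast, hchain, hnodup, hcoll⟩
  · simp at hlen
  · simp at hlen
  obtain rfl : T = a := by simpa using hhead.symm
  have hv : v ∈ graphMB E T := by
    have hvT : v ≠ T := fun h => by simp [h] at hnodup
    have hTv : E T v ∨ E v T := (List.isChain_cons_cons.mp hchain).1
    rw [mem_graphMB]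
    tauto
  obtain _ | ⟨w, p⟩ := p
  · exact hx (by simpa [← show v = x by simpa using hlast] using hv)
  obtain ⟨hTv, hwv⟩ : E T v ∧ E w v := by
    by_contra hnc
    exact (hcoll 0 (by simp)).2 hnc (hZ hv)
  have hw : w ∈ graphMB E T := by
    have hwT : w ≠ T := fun h => by simp [h] at hnodup
    exact mem_graphMB.mpr ⟨hwT, .inr (.inr ⟨v, hTv, hwv⟩)⟩
  obtain _ | ⟨u, p⟩ := p
  · exact hx (by simpa [← show w = x by simpa using hlast] using hw)
  -- `w` is a spouse, hence in `Z`, so it must be a collider; with `w → v` that is a 2-cycle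
  refine (hcoll 1 (by simp)).2 (fun ⟨hvw, _⟩ => ?_) (hZ hw)
  exact hacyclic w (.tail (.single hwv) hvw)

end DSeparation

section Runs

variable {V : Type*} [DecidableEq V] {E : V → V → Prop} {T : V}

lemma reflTransGen_fwdStep_keeps_dependent {S₀ : Finset V} {x : V}
    (hdep : ∀ S : Finset V, S₀ ⊆ S → ¬ DSeparated E ↑S T x) {p q : Finset V × Finset V}
    (h : Relation.ReflTransGen (FwdStep E T) p q) (hS₀ : S₀ ⊆ p.1) (hx : x ∈ p.1 ∪ p.2) :
    S₀ ⊆ q.1 ∧ x ∈ q.1 ∪ q.2 := by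
  induction h with
  | refl => exact ⟨hS₀, hx⟩
  | tail _ step ih =>
    obtain ⟨hS₀, hx⟩ := ih
    obtain ⟨y, -, -, hS, hR⟩ := step
    rw [hS, hR]
    refine ⟨hS₀.trans (Finset.subset_insert _ _), ?_⟩
    by_cases hxy : x = y
    · simp [hxy]
    · simp only [Finset.mem_union, Finset.mem_insert, Finset.mem_erase, Finset.mem_filter] at hx ⊢
      tauto

lemma subset_of_reflTransGen_backStep {M S S' : Finset V}
    (hM : ∀ x ∈ M, ∀ S : Finset V, M ⊆ S → ¬ DSeparated E ↑(S.erase x) T x)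
    (h : Relation.ReflTransGen (BackStep E T) S S') (hMS : M ⊆ S) : M ⊆ S' := by
  induction h with
  | refl => exact hMS
  | tail _ step ih =>
    obtain ⟨y, -, hsep, rfl⟩ := step
    have hyM : y ∉ M := fun hy => hM y hy _ ih hsep
    exact fun z hz => Finset.mem_erase.mpr ⟨fun h => hyM (h ▸ hz), ih hz⟩

variable [Fintype V]

lemma FwdPhase.mem_of_forall_not_dSeparated {S₀ S₁ : Finset V} (h : FwdPhase E T S₀ S₁)
    {x : V} (hxT : x ≠ T) (hdep : ∀ S : Finset V, S₀ ⊆ S → ¬ DSeparated E ↑S T x) :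
    x ∈ S₁ := by
  obtain ⟨R₁, hsteps, hdone⟩ := h
  have hx : x ∈ S₀ ∪ (Finset.univ.erase T \ S₀) := by
    by_cases x ∈ S₀ <;> simp [*]
  obtain ⟨hS₀, hx⟩ := reflTransGen_fwdStep_keeps_dependent hdep hsteps subset_rfl hx
  exact (Finset.mem_union.mp hx).resolve_right fun hR => hdep S₁ hS₀ (hdone x hR)

lemma subset_graphMB_of_backDone (hacyclic : ∀ v, ¬ Relation.TransGen E v v) {S : Finset V}
    (h : BackDone E T S) (hMB : graphMB E T ⊆ S) : S ⊆ graphMB E T := by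
  intro x hx
  by_contra hxMB
  refine h x hx (dSeparated_of_graphMB_subset hacyclic hxMB fun z hz => ?_)
  exact Finset.mem_erase.mpr ⟨fun h => hxMB (h ▸ hz), hMB hz⟩

lemma FBEDRun.mem_of_adj {S₀ S₁ : Finset V} (h : FBEDRun E T S₀ S₁) {x : V} (hxT : x ≠ T)
    (hadj : E x T ∨ E T x) : x ∈ S₁ := by
  obtain ⟨Sf, hfwd, hback, -⟩ := h
  have hdep : ∀ Z : Set V, ¬ DSeparated E Z T x :=
    fun _ => not_dSeparated_of_adj hxT.symm hadj.symm
  have hSf : {x} ⊆ Sf := Finset.singleton_subset_iff.mpr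
    (hfwd.mem_of_forall_not_dSeparated hxT fun _ _ => hdep _)
  refine Finset.singleton_subset_iff.mp (subset_of_reflTransGen_backStep ?_ hback hSf)
  rintro _ hy - -
  exact Finset.mem_singleton.mp hy ▸ hdep _

lemma FBEDRun.eq_graphMB (hacyclic : ∀ v, ¬ Relation.TransGen E v v) {S₀ S₁ : Finset V}
    (h : FBEDRun E T S₀ S₁) (hS₀ : ∀ c, E T c → c ∈ S₀) : S₁ = graphMB E T := by
  obtain ⟨Sf, hfwd, hback, hdone⟩ := h
  have hSf : graphMB E T ⊆ Sf := fun x hx =>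
    hfwd.mem_of_forall_not_dSeparated (mem_graphMB.mp hx).1 fun _ hS =>
      not_dSeparated_of_mem_graphMB hacyclic hx fun c hTc _ => hS (hS₀ c hTc)
  have hS₁ : graphMB E T ⊆ S₁ := by
    refine subset_of_reflTransGen_backStep (fun x hx S hS => ?_) hback hSf
    refine not_dSeparated_of_mem_graphMB hacyclic hx fun c hTc hxc => ?_
    have hc : c ∈ graphMB E T :=
      mem_graphMB.mpr ⟨(ne_of_acyclic hacyclic hTc).symm, .inr (.inl hTc)⟩
    exact Finset.mem_erase.mpr ⟨(ne_of_acyclic hacyclic hxc).symm, hS hc⟩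
  exact (subset_graphMB_of_backDone hacyclic hdone hS₁).antisymm hS₁

end Runs

/-- For a distribution faithful to a Bayesian network (so the conditional-independence
oracle coincides with d-separation in the DAG `E`), the Forward-Backward with Early
Dropping algorithm run for two Runs returns exactly the Markov blanket of the target `T`:
Run 1 selects all parents and children of `T` (none can be d-separated from `T`), Run 2
additionally selects all spouses of `T` (conditioning on a common child d-connects them
to `T`), and backward elimination removes exactly the selected variables outside the
Markov blanket. -/
theorem fbed_two_runs_markov_blanket {V : Type*} [Fintype V] [DecidableEq V]
    (E : V → V → Prop) (hacyclic : ∀ v, ¬ Relation.TransGen E v v) (T : V) :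
    ∀ S₁ S₂ : Finset V, FBEDRun E T ∅ S₁ → FBEDRun E T S₁ S₂ → S₂ = graphMB E T := by
  intro S₁ S₂ h₁ h₂
  exact h₂.eq_graphMB hacyclic fun c hTc =>
    h₁.mem_of_adj (ne_of_acyclic hacyclic hTc).symm (.inr hTc)
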